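/- Let A = {(0,0)} ⊆ ℝ² and Ω = {(x,y) ∈ ℝ² : 0 < y < x^α, 0 < x < 1} with α > 1. Then the relative box dimension dim_B(A, Ω) exists and equals 1 − α, and the relative Minkowski content satisfies M^{1-α}(A, Ω) = 1/(1+α). -/

import Mathlib

open MeasureTheory Metric Filter Set Topology

/-- The relative upper `r`-dimensional Minkowski content of `(A, Ω)` in `ℝ^N`. -/
noncomputable def relUpperMinkowskiContent (N : ℕ) (A Ω : Set (EuclideanSpace ℝ (Fin N)))
    (r : ℝ) : ENNReal :=
  Filter.limsup
    (fun t : ℝ =>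
      volume (Metric.thickening t A ∩ Ω) / ENNReal.ofReal (t ^ ((N : ℝ) - r)))
    (nhdsWithin 0 (Set.Ioi 0))

/-- The relative lower `r`-dimensional Minkowski content of `(A, Ω)` in `ℝ^N`. -/
noncomputable def relLowerMinkowskiContent (N : ℕ) (A Ω : Set (EuclideanSpace ℝ (Fin N)))
    (r : ℝ) : ENNReal :=
  Filter.liminf
    (fun t : ℝ =>
      volume (Metric.thickening t A ∩ Ω) / ENNReal.ofReal (t ^ ((N : ℝ) - r)))
    (nhdsWithin 0 (Set.Ioi 0))

/-- The relative upper box dimension of `(A, Ω)`. -/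
noncomputable def relUpperBoxDim (N : ℕ) (A Ω : Set (EuclideanSpace ℝ (Fin N))) : ℝ :=
  sInf {r : ℝ | relUpperMinkowskiContent N A Ω r = 0}

/-- The relative lower box dimension of `(A, Ω)`. -/
noncomputable def relLowerBoxDim (N : ℕ) (A Ω : Set (EuclideanSpace ℝ (Fin N))) : ℝ :=
  sInf {r : ℝ | relLowerMinkowskiContent N A Ω r = 0}

/-! For `0 < t < 1` the set `B(0, t) ∩ Ω` lies between the cusps `{0 < x < s, 0 < y < x ^ α}`
with `s = t - t ^ α` and `s = t`: the smaller one is inside the ball because there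
`‖(x, y)‖ ≤ x + y < (t - t ^ α) + t ^ α`. A cusp of width `s` has area `s ^ (α + 1) / (α + 1)`
and `(t - t ^ α) / t → 1` as `α > 1`, so `|B(0, t) ∩ Ω| / t ^ (1 + α) → 1 / (1 + α)`.
As this limit lies in `(0, ∞)`, the ratio with any smaller (larger) exponent tends to `0` (`∞`),
which pins both relative box dimensions at `2 - (1 + α) = 1 - α`. -/

open scoped ENNReal

lemma tendsto_ofReal_rpow_nhdsGT_zero_of_pos {s : ℝ} (hs : 0 < s) :
    Tendsto (fun t : ℝ => ENNReal.ofReal (t ^ s)) (𝓝[>] 0) (𝓝 0) := by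
  have h := (Real.continuousAt_rpow_const 0 s (Or.inr hs.le)).tendsto
  rw [Real.zero_rpow hs.ne'] at h
  simpa [Function.comp_def] using
    (ENNReal.continuous_ofReal.tendsto 0).comp (h.mono_left nhdsWithin_le_nhds)

lemma tendsto_ofReal_rpow_nhdsGT_zero_of_neg {s : ℝ} (hs : s < 0) :
    Tendsto (fun t : ℝ => ENNReal.ofReal (t ^ s)) (𝓝[>] 0) (𝓝 ∞) :=
  ENNReal.tendsto_ofReal_atTop.comp (tendsto_rpow_neg_nhdsGT_zero hs)

lemma div_ofReal_rpow_eq_mul {t : ℝ} (ht : 0 < t) (x : ℝ≥0∞) (a b : ℝ) :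
    x / ENNReal.ofReal (t ^ b) = x / ENNReal.ofReal (t ^ a) * ENNReal.ofReal (t ^ (a - b)) := by
  have hrpow : ∀ s : ℝ, (ENNReal.ofReal (t ^ s))⁻¹ = ENNReal.ofReal (t ^ (-s)) := fun s => by
    rw [← ENNReal.ofReal_inv_of_pos (Real.rpow_pos_of_pos ht s), Real.rpow_neg ht.le]
  rw [div_eq_mul_inv, div_eq_mul_inv, mul_assoc, hrpow, hrpow,
    ← ENNReal.ofReal_mul (Real.rpow_nonneg ht.le _), ← Real.rpow_add ht]
  ring_nf

lemma exists_tendsto_div_ofReal_rpow {f : ℝ → ℝ≥0∞} {a : ℝ} {c : ℝ≥0∞}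
    (h : Tendsto (fun t => f t / ENNReal.ofReal (t ^ a)) (𝓝[>] 0) (𝓝 c))
    (hc₀ : c ≠ 0) (hc : c ≠ ∞) (b : ℝ) :
    ∃ x, Tendsto (fun t => f t / ENNReal.ofReal (t ^ b)) (𝓝[>] 0) (𝓝 x) ∧ (x = 0 ↔ b < a) := by
  have hmul : (fun t => f t / ENNReal.ofReal (t ^ a) * ENNReal.ofReal (t ^ (a - b)))
      =ᶠ[𝓝[>] 0] fun t => f t / ENNReal.ofReal (t ^ b) := by
    filter_upwards [self_mem_nhdsWithin] with t ht
    exact (div_ofReal_rpow_eq_mul ht _ a b).symm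
  rcases lt_trichotomy b a with hba | rfl | hab
  · refine ⟨0, ?_, by simp [hba]⟩
    have := ENNReal.Tendsto.mul h (Or.inr ENNReal.zero_ne_top)
      (tendsto_ofReal_rpow_nhdsGT_zero_of_pos (sub_pos.2 hba)) (Or.inr hc)
    exact (mul_zero c ▸ this).congr' hmul
  · exact ⟨c, h, by simp [hc₀]⟩
  · refine ⟨∞, ?_, by simp [hab.not_gt]⟩
    have := ENNReal.Tendsto.mul h (Or.inl hc₀)
      (tendsto_ofReal_rpow_nhdsGT_zero_of_neg (sub_neg.2 hab)) (Or.inl ENNReal.top_ne_zero)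
    exact (ENNReal.mul_top hc₀ ▸ this).congr' hmul

section BoxDimension

variable {N : ℕ} {A Ω : Set (EuclideanSpace ℝ (Fin N))} {d : ℝ} {c : ℝ≥0∞}

lemma relUpperMinkowskiContent_eq_zero_iff_of_tendsto
    (h : Tendsto (fun t => volume (thickening t A ∩ Ω) / ENNReal.ofReal (t ^ ((N : ℝ) - d)))
      (𝓝[>] 0) (𝓝 c)) (hc₀ : c ≠ 0) (hc : c ≠ ∞) (r : ℝ) :
    relUpperMinkowskiContent N A Ω r = 0 ↔ d < r := by
  obtain ⟨x, hx, hx₀⟩ := exists_tendsto_div_ofReal_rpow h hc₀ hc ((N : ℝ) - r)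
  rw [relUpperMinkowskiContent, hx.limsup_eq, hx₀, sub_lt_sub_iff_left]

lemma relLowerMinkowskiContent_eq_zero_iff_of_tendsto
    (h : Tendsto (fun t => volume (thickening t A ∩ Ω) / ENNReal.ofReal (t ^ ((N : ℝ) - d)))
      (𝓝[>] 0) (𝓝 c)) (hc₀ : c ≠ 0) (hc : c ≠ ∞) (r : ℝ) :
    relLowerMinkowskiContent N A Ω r = 0 ↔ d < r := by
  obtain ⟨x, hx, hx₀⟩ := exists_tendsto_div_ofReal_rpow h hc₀ hc ((N : ℝ) - r)
  rw [relLowerMinkowskiContent, hx.liminf_eq, hx₀, sub_lt_sub_iff_left]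

lemma relUpperBoxDim_eq_of_tendsto
    (h : Tendsto (fun t => volume (thickening t A ∩ Ω) / ENNReal.ofReal (t ^ ((N : ℝ) - d)))
      (𝓝[>] 0) (𝓝 c)) (hc₀ : c ≠ 0) (hc : c ≠ ∞) :
    relUpperBoxDim N A Ω = d := by
  have : {r | relUpperMinkowskiContent N A Ω r = 0} = Ioi d :=
    Set.ext (relUpperMinkowskiContent_eq_zero_iff_of_tendsto h hc₀ hc)
  rw [relUpperBoxDim, this, csInf_Ioi]

lemma relLowerBoxDim_eq_of_tendsto
    (h : Tendsto (fun t => volume (thickening t A ∩ Ω) / ENNReal.ofReal (t ^ ((N : ℝ) - d)))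
      (𝓝[>] 0) (𝓝 c)) (hc₀ : c ≠ 0) (hc : c ≠ ∞) :
    relLowerBoxDim N A Ω = d := by
  have : {r | relLowerMinkowskiContent N A Ω r = 0} = Ioi d :=
    Set.ext (relLowerMinkowskiContent_eq_zero_iff_of_tendsto h hc₀ hc)
  rw [relLowerBoxDim, this, csInf_Ioi]

end BoxDimension

def cusp (α s : ℝ) : Set (EuclideanSpace ℝ (Fin 2)) :=
  {p | 0 < p 0 ∧ p 0 < s ∧ 0 < p 1 ∧ p 1 < p 0 ^ α}

lemma EuclideanSpace.norm_le_abs_add_abs (p : EuclideanSpace ℝ (Fin 2)) :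
    ‖p‖ ≤ |p 0| + |p 1| := by
  rw [EuclideanSpace.norm_eq, Fin.sum_univ_two, Real.sqrt_le_left (by positivity)]
  simp only [Real.norm_eq_abs, sq_abs]
  nlinarith [abs_nonneg (p 0), abs_nonneg (p 1), sq_abs (p 0), sq_abs (p 1)]

lemma volume_cusp {α s : ℝ} (hα : -1 < α) (hs : 0 ≤ s) :
    volume (cusp α s) = ENNReal.ofReal (s ^ (α + 1) / (α + 1)) := by
  let e : EuclideanSpace ℝ (Fin 2) → ℝ × ℝ := fun p =>
    MeasurableEquiv.piFinTwo (fun _ => ℝ) ((MeasurableEquiv.toLp 2 (Fin 2 → ℝ)).symm p)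
  have he : MeasurePreserving e volume volume :=
    (volume_preserving_piFinTwo (fun _ => ℝ)).comp
      (EuclideanSpace.volume_preserving_symm_measurableEquiv_toLp (Fin 2))
  have hregion : cusp α s = e ⁻¹' regionBetween (fun _ => 0) (fun x => x ^ α) (Ioo 0 s) := by
    ext p
    simp [e, cusp, regionBetween, MeasurableEquiv.piFinTwo, and_assoc]
  have hmeas : MeasurableSet (regionBetween (fun _ => (0 : ℝ)) (fun x => x ^ α) (Ioo 0 s)) :=
    measurableSet_regionBetween measurable_const (measurable_id.pow_const α) measurableSet_Ioo
  have hint : IntegrableOn (fun x : ℝ => x ^ α) (Ioo 0 s) := by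
    have := intervalIntegral.intervalIntegrable_rpow' (a := 0) (b := s) hα
    rw [intervalIntegrable_iff, uIoc_of_le hs] at this
    exact this.mono_set Ioo_subset_Ioc_self
  rw [hregion, he.measure_preimage hmeas.nullMeasurableSet, Measure.volume_eq_prod,
    volume_regionBetween_eq_integral (integrableOn_const measure_Ioo_lt_top.ne) hint
      measurableSet_Ioo (fun x hx => Real.rpow_nonneg hx.1.le α)]
  simp only [Pi.sub_apply, sub_zero]
  rw [← integral_Ioc_eq_integral_Ioo, ← intervalIntegral.integral_of_le hs,
    integral_rpow (Or.inl hα), Real.zero_rpow (by linarith), sub_zero]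

lemma volume_cusp_mul_div_rpow {α c t : ℝ} (hα : -1 < α) (hc : 0 ≤ c) (ht : 0 < t) :
    volume (cusp α (c * t)) / ENNReal.ofReal (t ^ (α + 1)) =
      ENNReal.ofReal (c ^ (α + 1) / (α + 1)) := by
  have htα : 0 < t ^ (α + 1) := Real.rpow_pos_of_pos ht _
  rw [volume_cusp hα (mul_nonneg hc ht.le), Real.mul_rpow hc ht.le, mul_div_right_comm,
    ENNReal.ofReal_mul (div_nonneg (Real.rpow_nonneg hc _) (by linarith))]
  exact ENNReal.mul_div_cancel_right (by simpa using htα) ENNReal.ofReal_ne_top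

lemma ball_inter_cusp_subset (α s t : ℝ) : ball 0 t ∩ cusp α s ⊆ cusp α t := by
  rintro p ⟨hp, hx, -, hy, hyx⟩
  refine ⟨hx, ?_, hy, hyx⟩
  rw [mem_ball_zero_iff] at hp
  exact (le_abs_self _).trans_lt ((PiLp.norm_apply_le p 0).trans_lt hp)

lemma cusp_subset_ball_inter_cusp {α s t : ℝ} (hα : 0 ≤ α) (ht : 0 ≤ t) (hts : t ≤ s) :
    cusp α (t - t ^ α) ⊆ ball 0 t ∩ cusp α s := by
  rintro p ⟨hx, hxt, hy, hyx⟩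
  have htα : 0 ≤ t ^ α := Real.rpow_nonneg ht α
  have hyt : p 1 < t ^ α :=
    hyx.trans_le (Real.rpow_le_rpow hx.le (by linarith) hα)
  refine ⟨?_, hx, by linarith, hy, hyx⟩
  rw [mem_ball_zero_iff]
  calc ‖p‖ ≤ |p 0| + |p 1| := EuclideanSpace.norm_le_abs_add_abs p
    _ = p 0 + p 1 := by rw [abs_of_pos hx, abs_of_pos hy]
    _ < t := by linarith

lemma tendsto_volume_ball_inter_cusp_div_rpow {α : ℝ} (hα : 1 < α) :
    Tendsto (fun t => volume (ball 0 t ∩ cusp α 1) / ENNReal.ofReal (t ^ (α + 1)))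
      (𝓝[>] 0) (𝓝 (ENNReal.ofReal (1 / (α + 1)))) := by
  have hα₀ : (-1 : ℝ) < α := by linarith
  have hlower : Tendsto (fun t : ℝ => ENNReal.ofReal ((1 - t ^ (α - 1)) ^ (α + 1) / (α + 1)))
      (𝓝[>] 0) (𝓝 (ENNReal.ofReal (1 / (α + 1)))) := by
    have hcont : ContinuousAt (fun t : ℝ => (1 - t ^ (α - 1)) ^ (α + 1) / (α + 1)) 0 := by
      have := Real.continuousAt_rpow_const 0 (α - 1) (Or.inr (by linarith))
      fun_prop (disch := simp [Real.zero_rpow (show α - 1 ≠ 0 by linarith)])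
    simpa [Function.comp_def, Real.zero_rpow (show α - 1 ≠ 0 by linarith)] using
      (ENNReal.continuous_ofReal.continuousAt.comp hcont).tendsto.mono_left nhdsWithin_le_nhds
  refine tendsto_of_tendsto_of_tendsto_of_le_of_le' hlower tendsto_const_nhds ?_ ?_ <;>
    filter_upwards [Ioo_mem_nhdsGT zero_lt_one] with t ⟨ht₀, ht₁⟩
  · have hshrink : t - t ^ α = (1 - t ^ (α - 1)) * t := by
      rw [sub_mul, one_mul, ← Real.rpow_add_one ht₀.ne', sub_add_cancel]
    have hsmall : t ^ (α - 1) ≤ 1 := Real.rpow_le_one ht₀.le ht₁.le (by linarith)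
    rw [← volume_cusp_mul_div_rpow hα₀ (sub_nonneg.2 hsmall) ht₀, ← hshrink]
    gcongr
    exact cusp_subset_ball_inter_cusp (by linarith) ht₀.le ht₁.le
  · calc _ ≤ volume (cusp α (1 * t)) / ENNReal.ofReal (t ^ (α + 1)) := by
          rw [one_mul]
          gcongr
          exact ball_inter_cusp_subset α 1 t
      _ = _ := by rw [volume_cusp_mul_div_rpow hα₀ zero_le_one ht₀, Real.one_rpow]

/-- For `A = {(0,0)}` and `Ω = {(x,y) : 0 < y < x^α, 0 < x < 1}` with `α > 1`,
the relative box dimension exists and equals `1 - α`, and the relative Minkowski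
content is `M^{1-α}(A,Ω) = 1/(1+α)`. -/
theorem stmt_4 (α : ℝ) (hα : 1 < α)
    (A : Set (EuclideanSpace ℝ (Fin 2))) (hA : A = {0})
    (Ω : Set (EuclideanSpace ℝ (Fin 2)))
    (hΩ : Ω = {p : EuclideanSpace ℝ (Fin 2) |
      0 < p 0 ∧ p 0 < 1 ∧ 0 < p 1 ∧ p 1 < p 0 ^ α}) :
    relUpperBoxDim 2 A Ω = 1 - α ∧ relLowerBoxDim 2 A Ω = 1 - α ∧
      Filter.Tendsto
        (fun t : ℝ =>
          volume (Metric.thickening t A ∩ Ω) / ENNReal.ofReal (t ^ ((2 : ℝ) - (1 - α))))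
        (nhdsWithin 0 (Set.Ioi 0)) (nhds (ENNReal.ofReal (1 / (1 + α)))) := by
  replace hΩ : Ω = cusp α 1 := hΩ
  subst hA hΩ
  have hlim : Tendsto (fun t : ℝ => volume (thickening t {0} ∩ cusp α 1) /
      ENNReal.ofReal (t ^ (((2 : ℕ) : ℝ) - (1 - α)))) (𝓝[>] 0)
      (𝓝 (ENNReal.ofReal (1 / (1 + α)))) := by
    have hexp : ((2 : ℕ) : ℝ) - (1 - α) = α + 1 := by push_cast; ring
    simpa only [thickening_singleton, hexp, add_comm 1 α] using
      tendsto_volume_ball_inter_cusp_div_rpow hα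
  have hc₀ : ENNReal.ofReal (1 / (1 + α)) ≠ 0 := by
    rw [ne_eq, ENNReal.ofReal_eq_zero, not_le]
    exact one_div_pos.2 (by linarith)
  exact ⟨relUpperBoxDim_eq_of_tendsto hlim hc₀ ENNReal.ofReal_ne_top,
    relLowerBoxDim_eq_of_tendsto hlim hc₀ ENNReal.ofReal_ne_top, by exact_mod_cast hlim⟩
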